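/- arXiv:1601.00185 — 4 statements merged into one kernel-verified Lean document; each statement's English description precedes it below -/
import Mathlib

section
/- Let c > 0 and let u, v ∈ ℂ² be vectors with ‖u‖² = ‖v‖² = c. Then the 2×2 complex matrix M = (1/(2c)) • (vecMulVec u (star u) + vecMulVec v (star v)) is Hermitian, and its multiset of eigenvalues is {1/2 + |⟨u, v⟩|/(2c), 1/2 − |⟨u, v⟩|/(2c)}. -/
/-!
The eigenvalues of a `2 × 2` Hermitian matrix are the two roots determined by its trace and
determinant. Here `M = (uu* + vv*)/(2c)` has trace `(‖u‖² + ‖v‖²)/(2c) = 1`, and the determinant of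
`uu* + vv*` is the Gram determinant `‖u‖²‖v‖² - |⟨u, v⟩|²`, so `det M = 1/4 - (|⟨u, v⟩|/(2c))²`,
which is the product of `1/2 ± |⟨u, v⟩|/(2c)`.
-/

open scoped BigOperators InnerProductSpace

open Matrix

theorem Multiset.pair_eq_pair_of_add_eq_of_mul_eq {R : Type*} [CommRing R] [IsDomain R]
    {a b x y : R} (hs : a + b = x + y) (hp : a * b = x * y) :
    ({a, b} : Multiset R) = {x, y} := by
  have h : (a - x) * (a - y) = 0 := by linear_combination a * hs - hp
  rcases mul_eq_zero.mp h with hx | hy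
  · obtain rfl : a = x := sub_eq_zero.mp hx
    rw [add_left_cancel hs]
  · obtain rfl : a = y := sub_eq_zero.mp hy
    rw [add_left_cancel (hs.trans (add_comm _ _)), Multiset.pair_comm]

theorem Matrix.IsHermitian.eigenvalues_fin_two {𝕜 : Type*} [RCLike 𝕜]
    {A : Matrix (Fin 2) (Fin 2) 𝕜} (hA : A.IsHermitian) {x y : ℝ}
    (htr : A.trace = (x + y : ℝ)) (hdet : A.det = (x * y : ℝ)) :
    Finset.univ.val.map hA.eigenvalues = {x, y} := by
  rw [hA.trace_eq_sum_eigenvalues, Fin.sum_univ_two, ← RCLike.ofReal_add] at htr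
  rw [hA.det_eq_prod_eigenvalues, Fin.prod_univ_two, ← RCLike.ofReal_mul] at hdet
  exact Multiset.pair_eq_pair_of_add_eq_of_mul_eq (RCLike.ofReal_injective htr)
    (RCLike.ofReal_injective hdet)

theorem Matrix.isHermitian_vecMulVec_self_star {α n : Type*} [Mul α] [StarMul α] (a : n → α) :
    (vecMulVec a (star a)).IsHermitian := by
  rw [IsHermitian, conjTranspose_vecMulVec, star_star]

theorem Matrix.det_vecMulVec_add_vecMulVec {R : Type*} [CommRing R] (a a' b b' : Fin 2 → R) :
    (vecMulVec a a' + vecMulVec b b').det = (a ⬝ᵥ a') * (b ⬝ᵥ b') - (a ⬝ᵥ b') * (b ⬝ᵥ a') := by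
  simp only [det_fin_two, add_apply, vecMulVec_apply, dotProduct, Fin.sum_univ_two]
  ring

theorem EuclideanSpace.dotProduct_star_self {𝕜 ι : Type*} [RCLike 𝕜] [Fintype ι]
    (u : EuclideanSpace 𝕜 ι) : WithLp.ofLp u ⬝ᵥ star (WithLp.ofLp u) = (‖u‖ ^ 2 : ℝ) := by
  rw [RCLike.ofReal_pow, ← inner_self_eq_norm_sq_to_K]
  rfl

theorem EuclideanSpace.dotProduct_star_mul_dotProduct_star {𝕜 ι : Type*} [RCLike 𝕜] [Fintype ι]
    (u v : EuclideanSpace 𝕜 ι) :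
    (WithLp.ofLp u ⬝ᵥ star (WithLp.ofLp v)) * (WithLp.ofLp v ⬝ᵥ star (WithLp.ofLp u)) =
      (‖⟪u, v⟫_𝕜‖ ^ 2 : ℝ) := by
  rw [RCLike.ofReal_pow, ← RCLike.mul_conj, inner_conj_symm, mul_comm]
  rfl

theorem stmt3 (c : ℝ) (hc : 0 < c)
    (u v : EuclideanSpace ℂ (Fin 2))
    (hu : ‖u‖ ^ 2 = c) (hv : ‖v‖ ^ 2 = c)
    (M : Matrix (Fin 2) (Fin 2) ℂ)
    (hM : M = ((1 / (2 * c) : ℝ) : ℂ) •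
      (Matrix.vecMulVec (fun i => u i) (star fun i => u i) +
       Matrix.vecMulVec (fun i => v i) (star fun i => v i))) :
    ∃ hHerm : M.IsHermitian,
      Finset.univ.val.map hHerm.eigenvalues =
        ({1 / 2 + ‖⟪u, v⟫_ℂ‖ / (2 * c), 1 / 2 - ‖⟪u, v⟫_ℂ‖ / (2 * c)} : Multiset ℝ) := by
  set N := vecMulVec (fun i => u i) (star fun i => u i) +
    vecMulVec (fun i => v i) (star fun i => v i)
  have hN : N.IsHermitian :=
    (isHermitian_vecMulVec_self_star _).add (isHermitian_vecMulVec_self_star _)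
  have htr : N.trace = (2 * c : ℝ) := by
    rw [trace_add, trace_vecMulVec, trace_vecMulVec, EuclideanSpace.dotProduct_star_self,
      EuclideanSpace.dotProduct_star_self, hu, hv, RCLike.ofReal_eq_complex_ofReal]
    push_cast
    ring
  have hdet : N.det = (c ^ 2 - ‖⟪u, v⟫_ℂ‖ ^ 2 : ℝ) := by
    rw [det_vecMulVec_add_vecMulVec, EuclideanSpace.dotProduct_star_mul_dotProduct_star,
      EuclideanSpace.dotProduct_star_self, EuclideanSpace.dotProduct_star_self, hu, hv,
      RCLike.ofReal_eq_complex_ofReal]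
    push_cast
    ring
  subst hM
  have hHerm := hN.smul (Complex.conj_ofReal (1 / (2 * c)))
  refine ⟨hHerm, hHerm.eigenvalues_fin_two ?_ ?_⟩
  · rw [trace_smul, htr, smul_eq_mul, ← Complex.ofReal_mul, RCLike.ofReal_eq_complex_ofReal]
    congr 1
    field_simp
    ring
  · rw [det_smul, hdet, Fintype.card_fin, ← Complex.ofReal_pow, ← Complex.ofReal_mul,
      RCLike.ofReal_eq_complex_ofReal]
    congr 1
    field_simp
    ring
end

section
/- Let H be a complex inner product space, let Q ∈ [0,1], let α, β be positive reals with α² + β² = 1, and let e₀, e₁, e₂, e₃ ∈ H satisfy ‖e₀‖² = ‖e₃‖² = 1 − Q, ‖e₁‖² = ‖e₂‖² = Q, Re⟨e₀, e₁⟩ = 0, Re⟨e₂, e₃⟩ = 0, Re⟨e₀, e₂⟩ = 0, and Re⟨e₁, e₃⟩ = 0. Let Q_A = ‖(αβ) • e₀ − (α²) • e₁ + (β²) • e₂ − (αβ) • e₃‖². Then Re⟨e₀, e₃⟩ = 1 − 2Q + (Q − Q_A)/(2α²β²) − Re⟨e₁, e₂⟩. -/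
open scoped InnerProductSpace

theorem stmt8 {H : Type*} [NormedAddCommGroup H] [InnerProductSpace ℂ H]
    (Q : ℝ) (hQ : Q ∈ Set.Icc (0 : ℝ) 1)
    (α β : ℝ) (hα : 0 < α) (hβ : 0 < β) (hαβ : α ^ 2 + β ^ 2 = 1)
    (e₀ e₁ e₂ e₃ : H)
    (he₀ : ‖e₀‖ ^ 2 = 1 - Q) (he₃ : ‖e₃‖ ^ 2 = 1 - Q)
    (he₁ : ‖e₁‖ ^ 2 = Q) (he₂ : ‖e₂‖ ^ 2 = Q)
    (h01 : (⟪e₀, e₁⟫_ℂ).re = 0) (h23 : (⟪e₂, e₃⟫_ℂ).re = 0)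
    (h02 : (⟪e₀, e₂⟫_ℂ).re = 0) (h13 : (⟪e₁, e₃⟫_ℂ).re = 0)
    (QA : ℝ)
    (hQA : QA = ‖(α * β) • e₀ - (α ^ 2) • e₁ + (β ^ 2) • e₂ - (α * β) • e₃‖ ^ 2) :
    (⟪e₀, e₃⟫_ℂ).re = 1 - 2 * Q + (Q - QA) / (2 * α ^ 2 * β ^ 2) - (⟪e₁, e₂⟫_ℂ).re := by
  have h10 : (⟪e₁, e₀⟫_ℂ).re = 0 := by rw [← inner_conj_symm, Complex.conj_re]; exact h01
  have h32 : (⟪e₃, e₂⟫_ℂ).re = 0 := by rw [← inner_conj_symm, Complex.conj_re]; exact h23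
  have h20 : (⟪e₂, e₀⟫_ℂ).re = 0 := by rw [← inner_conj_symm, Complex.conj_re]; exact h02
  have h31 : (⟪e₃, e₁⟫_ℂ).re = 0 := by rw [← inner_conj_symm, Complex.conj_re]; exact h13
  have h30 : (⟪e₃, e₀⟫_ℂ).re = (⟪e₀, e₃⟫_ℂ).re := by
    rw [← inner_conj_symm, Complex.conj_re]
  have h21 : (⟪e₂, e₁⟫_ℂ).re = (⟪e₁, e₂⟫_ℂ).re := by
    rw [← inner_conj_symm, Complex.conj_re]
  have hn0 : (⟪e₀, e₀⟫_ℂ).re = 1 - Q := by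
    rw [← RCLike.re_to_complex, inner_self_eq_norm_sq]; exact he₀
  have hn1 : (⟪e₁, e₁⟫_ℂ).re = Q := by
    rw [← RCLike.re_to_complex, inner_self_eq_norm_sq]; exact he₁
  have hn2 : (⟪e₂, e₂⟫_ℂ).re = Q := by
    rw [← RCLike.re_to_complex, inner_self_eq_norm_sq]; exact he₂
  have hn3 : (⟪e₃, e₃⟫_ℂ).re = 1 - Q := by
    rw [← RCLike.re_to_complex, inner_self_eq_norm_sq]; exact he₃
  have key : QA = ((⟪((α * β) • e₀ - (α ^ 2) • e₁ + (β ^ 2) • e₂ - (α * β) • e₃ : H),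
      ((α * β) • e₀ - (α ^ 2) • e₁ + (β ^ 2) • e₂ - (α * β) • e₃ : H)⟫_ℂ)).re := by
    rw [hQA, ← RCLike.re_to_complex, inner_self_eq_norm_sq]
  have hαβ2 : α^4 + β^4 = 1 - 2*(α^2*β^2) := by
    linear_combination (α^2 + β^2 + 1) * hαβ
  rw [show QA = α^2*β^2*(2-2*Q) + (α^4+β^4)*Q
      - 2*α^2*β^2*(⟪e₀, e₃⟫_ℂ).re - 2*α^2*β^2*(⟪e₁, e₂⟫_ℂ).re from by
    rw [key]
    simp only [← algebraMap_smul ℂ (_ : ℝ) (_ : H), Complex.coe_algebraMap,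
      inner_sub_left, inner_sub_right, inner_add_left, inner_add_right,
      inner_smul_left, inner_smul_right, map_mul, Complex.conj_ofReal,
      ← Complex.ofReal_pow, Complex.sub_re, Complex.add_re, Complex.neg_re,
      Complex.sub_im, Complex.add_im, Complex.neg_im, Complex.mul_re,
      Complex.mul_im, Complex.ofReal_re, Complex.ofReal_im, Complex.ofReal_mul]
    rw [hn0, hn1, hn2, hn3, h01, h10, h02, h20, h13, h31, h23, h32, h30, h21]
    ring, hαβ2]
  have hne : α^2*β^2 ≠ 0 := by positivity
  field_simp
  ring
end

section
/- Let Q ∈ (0, 1/2). For every t ∈ [−Q, Q], (1−Q)·h(1/2 + |1 − 2Q − t|/(2(1−Q))) + Q·h(1/2 + |t|/(2Q)) ≤ h(Q), with equality when t = Q(1−2Q). Consequently, the minimum over t ∈ [−Q, Q] of 1 − (1−Q)·h(1/2 + |1 − 2Q − t|/(2(1−Q))) − Q·h(1/2 + |t|/(2Q)) − h(Q) equals 1 − 2·h(Q). -/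
/-- Binary entropy (base 2), with `binH 0 = binH 1 = 0`. -/
noncomputable def binH (x : ℝ) : ℝ := -x * Real.logb 2 x - (1 - x) * Real.logb 2 (1 - x)

lemma binH_eq (x : ℝ) : binH x = Real.binEntropy x / Real.log 2 := by
  simp only [binH, Real.binEntropy, Real.logb, Real.log_inv]
  ring

lemma key_ineq (Q : ℝ) (hQ : Q ∈ Set.Ioo (0 : ℝ) (1 / 2)) :
    ∀ t ∈ Set.Icc (-Q) Q,
      (1 - Q) * binH (1 / 2 + |1 - 2 * Q - t| / (2 * (1 - Q)))
        + Q * binH (1 / 2 + |t| / (2 * Q)) ≤ binH Q := by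
  obtain ⟨hQ0, hQh⟩ := hQ
  intro t ht
  obtain ⟨ht1, ht2⟩ := ht
  have hQ1 : Q < 1 := by linarith
  have h1Q : (0:ℝ) < 1 - Q := by linarith
  set a : ℝ := 1 / 2 + |1 - 2 * Q - t| / (2 * (1 - Q)) with ha
  set b : ℝ := 1 / 2 + |t| / (2 * Q) with hb
  have habs1 : |1 - 2 * Q - t| ≤ 1 - Q := by
    rw [abs_le]; constructor <;> nlinarith
  have habs2 : |t| ≤ Q := abs_le.2 ⟨ht1, ht2⟩
  have ha1 : a ≤ 1 := by
    rw [ha]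
    have h1 : |1 - 2 * Q - t| / (2 * (1 - Q)) ≤ (1 - Q) / (2 * (1 - Q)) :=
      div_le_div_of_nonneg_right habs1 (by linarith)
    have h2 : (1 - Q) / (2 * (1 - Q)) = 1 / 2 := by field_simp
    linarith
  have ha0 : 1 / 2 ≤ a := by
    rw [ha]
    have : 0 ≤ |1 - 2 * Q - t| / (2 * (1 - Q)) :=
      div_nonneg (abs_nonneg _) (by linarith)
    linarith
  have hb1 : b ≤ 1 := by
    rw [hb]
    have h1 : |t| / (2 * Q) ≤ Q / (2 * Q) :=
      div_le_div_of_nonneg_right habs2 (by linarith)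
    have h2 : Q / (2 * Q) = 1 / 2 := by field_simp
    linarith
  have hb0 : 1 / 2 ≤ b := by
    rw [hb]
    have : 0 ≤ |t| / (2 * Q) := div_nonneg (abs_nonneg _) (by linarith)
    linarith
  -- convex combination
  have hconc : ConcaveOn ℝ (Set.Icc 0 1) Real.binEntropy :=
    Real.strictConcave_binEntropy.concaveOn
  have hcomb : (1 - Q) * Real.binEntropy a + Q * Real.binEntropy b ≤
      Real.binEntropy ((1 - Q) * a + Q * b) := by
    have := hconc.2 (x := a) (y := b)
      ⟨le_trans (by norm_num) ha0, ha1⟩ ⟨le_trans (by norm_num) hb0, hb1⟩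
      (le_of_lt h1Q) (le_of_lt hQ0) (by ring)
    simpa [smul_eq_mul] using this
  set m : ℝ := (1 - Q) * a + Q * b with hm
  have hmval : m = 1 / 2 + (|1 - 2 * Q - t| + |t|) / 2 := by
    rw [hm, ha, hb]
    field_simp
    ring
  have hmlb : 1 - Q ≤ m := by
    have habs : 1 - 2 * Q ≤ |1 - 2 * Q - t| + |t| := by
      have h := abs_sub_abs_le_abs_sub (1 - 2 * Q) t
      rw [abs_of_nonneg (by linarith : (0:ℝ) ≤ 1 - 2 * Q)] at h
      linarith
    rw [hmval]; linarith
  have hmub : m ≤ 1 := by rw [hmval]; linarith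
  have hmono : Real.binEntropy m ≤ Real.binEntropy (1 - Q) := by
    rcases eq_or_lt_of_le hmlb with h | h
    · rw [← h]
    · exact le_of_lt (Real.binEntropy_strictAntiOn
        ⟨by norm_num; linarith, by linarith⟩ ⟨by norm_num; linarith, hmub⟩ h)
  have hsym : Real.binEntropy (1 - Q) = Real.binEntropy Q := Real.binEntropy_one_sub Q
  have hfin : (1 - Q) * Real.binEntropy a + Q * Real.binEntropy b ≤ Real.binEntropy Q := by
    calc (1 - Q) * Real.binEntropy a + Q * Real.binEntropy b
        ≤ Real.binEntropy m := hcomb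
      _ ≤ Real.binEntropy (1 - Q) := hmono
      _ = Real.binEntropy Q := hsym
  have hlog2 : (0:ℝ) < Real.log 2 := Real.log_pos (by norm_num)
  rw [binH_eq, binH_eq, binH_eq]
  have hrw : (1 - Q) * (Real.binEntropy a / Real.log 2) + Q * (Real.binEntropy b / Real.log 2)
      = ((1 - Q) * Real.binEntropy a + Q * Real.binEntropy b) / Real.log 2 := by ring
  rw [hrw]
  gcongr

lemma binH_one_sub (x : ℝ) : binH (1 - x) = binH x := by
  rw [binH_eq, binH_eq, Real.binEntropy_one_sub]

lemma key_eq (Q : ℝ) (hQ : Q ∈ Set.Ioo (0 : ℝ) (1 / 2)) :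
    (1 - Q) * binH (1 / 2 + |1 - 2 * Q - Q * (1 - 2 * Q)| / (2 * (1 - Q)))
        + Q * binH (1 / 2 + |Q * (1 - 2 * Q)| / (2 * Q)) = binH Q := by
  obtain ⟨hQ0, hQh⟩ := hQ
  have h1Q : (0:ℝ) < 1 - Q := by linarith
  have h12Q : (0:ℝ) ≤ 1 - 2 * Q := by linarith
  have e1 : |1 - 2 * Q - Q * (1 - 2 * Q)| = (1 - 2 * Q) * (1 - Q) := by
    rw [abs_of_nonneg (by nlinarith)]; ring
  have e2 : |Q * (1 - 2 * Q)| = Q * (1 - 2 * Q) := abs_of_nonneg (by nlinarith)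
  have a1 : 1 / 2 + (1 - 2 * Q) * (1 - Q) / (2 * (1 - Q)) = 1 - Q := by
    field_simp; ring
  have a2 : 1 / 2 + Q * (1 - 2 * Q) / (2 * Q) = 1 - Q := by
    field_simp; ring
  rw [e1, e2, a1, a2, binH_one_sub]
  ring

theorem stmt10 (Q : ℝ) (hQ : Q ∈ Set.Ioo (0 : ℝ) (1 / 2)) :
    (∀ t ∈ Set.Icc (-Q) Q,
      (1 - Q) * binH (1 / 2 + |1 - 2 * Q - t| / (2 * (1 - Q)))
        + Q * binH (1 / 2 + |t| / (2 * Q)) ≤ binH Q) ∧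
    ((1 - Q) * binH (1 / 2 + |1 - 2 * Q - Q * (1 - 2 * Q)| / (2 * (1 - Q)))
        + Q * binH (1 / 2 + |Q * (1 - 2 * Q)| / (2 * Q)) = binH Q) ∧
    IsLeast
      ((fun t => 1 - (1 - Q) * binH (1 / 2 + |1 - 2 * Q - t| / (2 * (1 - Q)))
          - Q * binH (1 / 2 + |t| / (2 * Q)) - binH Q) '' Set.Icc (-Q) Q)
      (1 - 2 * binH Q) := by
  obtain ⟨hQ0, hQh⟩ := hQ
  have hQset : Q ∈ Set.Ioo (0:ℝ) (1/2) := ⟨hQ0, hQh⟩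
  refine ⟨key_ineq Q hQset, key_eq Q hQset, ?_, ?_⟩
  · refine ⟨Q * (1 - 2 * Q), ⟨?_, ?_⟩, ?_⟩
    · nlinarith
    · nlinarith
    · simp only
      rw [show (1:ℝ) - (1 - Q) * binH (1 / 2 + |1 - 2 * Q - Q * (1 - 2 * Q)| / (2 * (1 - Q)))
          - Q * binH (1 / 2 + |Q * (1 - 2 * Q)| / (2 * Q)) - binH Q
          = 1 - ((1 - Q) * binH (1 / 2 + |1 - 2 * Q - Q * (1 - 2 * Q)| / (2 * (1 - Q)))
          + Q * binH (1 / 2 + |Q * (1 - 2 * Q)| / (2 * Q))) - binH Q by ring,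
        key_eq Q hQset]
      ring
  · rintro z ⟨t, ht, rfl⟩
    have := key_ineq Q hQset t ht
    simp only
    linarith
end

section
/- For every Q ∈ [0, 11/100], 1 − 2·h(Q) > 0, where h(x) = −x·logb 2 x − (1−x)·logb 2 (1−x) is the binary entropy (base 2) with h(0) = 0. -/
lemma key_log : 150 * Real.log 2 + 200 * Real.log 5 < 11 * Real.log 11 + 89 * Real.log 89 := by
  have h : Real.log ((2:ℝ)^150 * 5^200) < Real.log ((11:ℝ)^11 * 89^89) := by
    apply Real.log_lt_log (by positivity)
    norm_num
  rw [Real.log_mul (by positivity) (by positivity),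
      Real.log_mul (by positivity) (by positivity),
      Real.log_pow, Real.log_pow, Real.log_pow, Real.log_pow] at h
  push_cast at h
  linarith

lemma key : Real.binEntropy (11/100) < Real.log 2 / 2 := by
  have h100 : Real.log 100 = 2 * Real.log 2 + 2 * Real.log 5 := by
    rw [show (100:ℝ) = 2^2 * 5^2 by norm_num,
        Real.log_mul (by positivity) (by positivity), Real.log_pow, Real.log_pow]
    push_cast; ring
  have h11 : Real.log ((11:ℝ)/100) = Real.log 11 - Real.log 100 :=
    Real.log_div (by norm_num) (by norm_num)
  have h89 : Real.log ((89:ℝ)/100) = Real.log 89 - Real.log 100 :=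
    Real.log_div (by norm_num) (by norm_num)
  have h89' : (1 : ℝ) - 11/100 = 89/100 := by norm_num
  rw [Real.binEntropy, h89', Real.log_inv, Real.log_inv, h11, h89, h100]
  linarith [key_log]

theorem stmt11 : ∀ Q ∈ Set.Icc (0 : ℝ) (11 / 100), 1 - 2 * binH Q > 0 := by
  intro Q hQ
  obtain ⟨h0, h1⟩ := hQ
  have hlog2 : (0:ℝ) < Real.log 2 := Real.log_pos (by norm_num)
  have hmono : Real.binEntropy Q ≤ Real.binEntropy (11/100) := by
    rcases eq_or_lt_of_le h1 with h | h
    · rw [h]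
    · exact le_of_lt (Real.binEntropy_strictMonoOn ⟨h0, by linarith⟩
        ⟨by norm_num, by norm_num⟩ h)
  have : Real.binEntropy Q < Real.log 2 / 2 := lt_of_le_of_lt hmono key
  rw [binH_eq]
  rw [gt_iff_lt, sub_pos, mul_div_assoc', div_lt_one hlog2]
  linarith
end
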